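/- arXiv:2109.01094 — 4 statements merged into one kernel-verified Lean document; each statement's English description precedes it below -/
import Mathlib

section
/- Let φ be a repulsive tempered pair potential on (X,d,μ) and let γ be a damping function. Then for all integers k, ℓ ≥ 1 one has V_{k+ℓ}(γ) ≤ V_k(γ)·V_ℓ(γ); consequently the limit lim_{k→∞} V_k(γ)^{1/k} exists and equals inf_{k≥1} V_k(γ)^{1/k}. -/
open MeasureTheory ENNReal Filter

noncomputable section

/-- `e^{-t}` for `t ∈ [0,∞]`, with `e^{-∞} = 0`. -/
def expNegE (t : ℝ≥0∞) : ℝ := if t = ∞ then 0 else Real.exp (-t.toReal)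

variable {X : Type*} [MetricSpace X] [MeasurableSpace X]

/-- The weight `1 - e^{-φ(x,y)}`, as an extended nonnegative real. -/
def pairWt (φ : X → X → ℝ≥0∞) (x y : X) : ℝ≥0∞ := ENNReal.ofReal (1 - expNegE (φ x y))

/-- A repulsive pair potential: symmetric and jointly measurable, values in `[0,∞]`. -/
def IsRepulsivePotential (φ : X → X → ℝ≥0∞) : Prop :=
  (∀ x y, φ x y = φ y x) ∧ Measurable (Function.uncurry φ)

/-- The temperedness constant `C_φ = sup_v ∫ (1 - e^{-φ(x,v)}) dμ(x)`. -/
def CPhi (μ : Measure X) (φ : X → X → ℝ≥0∞) : ℝ≥0∞ := ⨆ v : X, ∫⁻ x, pairWt φ x v ∂μ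

/-- `φ` is tempered if `C_φ < ∞`. -/
def Tempered (μ : Measure X) (φ : X → X → ℝ≥0∞) : Prop := CPhi μ φ < ∞

/-- A damping function: a `[0,1]`-valued measurable function on nonempty tuples which is `1`
on singletons and decreases when a point is prepended. A tuple `(v_0, …, v_n)` of length
`n+1` is modelled as an element of `Fin (n+1) → X`. -/
def IsDamping (γ : ∀ n : ℕ, (Fin (n + 1) → X) → ℝ) : Prop :=
  (∀ n, Measurable (γ n)) ∧ (∀ n v, γ n v ∈ Set.Icc (0 : ℝ) 1) ∧ (∀ v, γ 0 v = 1) ∧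
    ∀ n (v : Fin (n + 2) → X), γ (n + 1) v ≤ γ n fun i => v i.succ

/-- The tuple `(v_0, v_1, …, v_k)`. -/
def tupCons {k : ℕ} (v0 : X) (v : Fin k → X) : Fin (k + 1) → X := Fin.cons v0 v

/-- `V_k(γ) = sup_{v_0} ∫_{X^k} ∏_{j=1}^k γ(v_0,…,v_j)(1 - e^{-φ(v_j,v_{j-1})}) dμ^k`. -/
def VK (μ : Measure X) (φ : X → X → ℝ≥0∞) (γ : ∀ n : ℕ, (Fin (n + 1) → X) → ℝ)
    (k : ℕ) : ℝ≥0∞ :=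
  ⨆ v0 : X, ∫⁻ v : Fin k → X,
      ∏ j : Fin k,
        (ENNReal.ofReal (γ (j.1 + 1) fun i : Fin (j.1 + 2) =>
            tupCons v0 v ⟨i.1, by have h1 := i.isLt; have h2 := j.isLt; omega⟩) *
          pairWt φ (tupCons v0 v j.succ) (tupCons v0 v j.castSucc))
    ∂(Measure.pi fun _ : Fin k => μ)

/-- The potential-weighted connective constant `Δ_φ(γ) = inf_{k ≥ 1} V_k(γ)^{1/k}`. -/
def DeltaPhi (μ : Measure X) (φ : X → X → ℝ≥0∞)
    (γ : ∀ n : ℕ, (Fin (n + 1) → X) → ℝ) : ℝ≥0∞ :=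
  ⨅ k : ℕ, VK μ φ γ (k + 1) ^ (((k : ℝ) + 1)⁻¹)

/-- The damping function `γ_w(v_0,…,v_n) = exp(-∑_{i=0}^{n-2} 1{d(v_n,v_i)<d(v_i,v_{i+1})} φ(v_n,v_i))`. -/
def gammaW (φ : X → X → ℝ≥0∞) : ∀ n : ℕ, (Fin (n + 1) → X) → ℝ := fun n v =>
  expNegE (∑ i : Fin (n - 1),
    if dist (v (Fin.last n)) (v ⟨i.1, by have := i.isLt; omega⟩) <
        dist (v ⟨i.1, by have := i.isLt; omega⟩) (v ⟨i.1 + 1, by have := i.isLt; omega⟩)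
    then φ (v (Fin.last n)) (v ⟨i.1, by have := i.isLt; omega⟩) else 0)

/-- Assumption 1: the pushforward of `μ` under `y ↦ d(y,x)` is absolutely continuous
with respect to Lebesgue measure, for every `x`. -/
def Assumption1 (μ : Measure X) : Prop :=
  ∀ x : X, (μ.map fun y => dist y x).AbsolutelyContinuous (volume : Measure ℝ)

/-- An infinite-depth tree recursion adapted to activity `λ` and damping function `γ`. -/
def IsInfTreeRecursion (μ : Measure X) (φ : X → X → ℝ≥0∞) (lam : ℝ)
    (γ π : ∀ n : ℕ, (Fin (n + 1) → X) → ℝ) : Prop :=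
  (∀ n, Measurable (π n)) ∧ (∀ n v, π n v ∈ Set.Icc (0 : ℝ) lam) ∧
    ∀ n : ℕ, ∀ᵐ v ∂(Measure.pi fun _ : Fin (n + 1) => μ),
      π n v = lam * γ n v *
        Real.exp (-(∫⁻ w, pairWt φ (v (Fin.last n)) w *
            ENNReal.ofReal (π (n + 1) (Fin.snoc v w)) ∂μ).toReal)

end


section Fekete
open ENNReal Filter in

lemma pow_div_aux (a : ℕ → ℝ≥0∞) (h : ∀ k ℓ : ℕ, 1 ≤ k → 1 ≤ ℓ → a (k+ℓ) ≤ a k * a ℓ)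
    {m : ℕ} (hm : 1 ≤ m) : ∀ q r : ℕ, 1 ≤ r → a (q * m + r) ≤ a m ^ q * a r := by
  intro q
  induction q with
  | zero => intro r hr; simp
  | succ n ih =>
    intro r hr
    have : (n+1) * m + r = m + (n * m + r) := by ring
    rw [this]
    calc a (m + (n * m + r)) ≤ a m * a (n * m + r) := h m (n*m+r) hm (by omega)
    _ ≤ a m * (a m ^ n * a r) := by exact mul_le_mul_right (ih r hr) _
    _ = a m ^ (n+1) * a r := by ring

lemma fekete_ennreal (a : ℕ → ℝ≥0∞)
    (h : ∀ k ℓ : ℕ, 1 ≤ k → 1 ≤ ℓ → a (k+ℓ) ≤ a k * a ℓ)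
    (hfin : ∀ k : ℕ, 1 ≤ k → a k < ∞) :
    Tendsto (fun k : ℕ => a k ^ ((k : ℝ)⁻¹)) atTop
      (nhds (⨅ k : ℕ, a (k + 1) ^ (((k : ℝ) + 1)⁻¹))) := by
  set L := ⨅ k : ℕ, a (k + 1) ^ (((k : ℝ) + 1)⁻¹) with hL
  -- lower bound : L ≤ a n ^ (n⁻¹) for n ≥ 1
  have hlow : ∀ n : ℕ, 1 ≤ n → L ≤ a n ^ ((n : ℝ)⁻¹) := by
    intro n hn
    obtain ⟨k, rfl⟩ : ∃ k, n = k + 1 := ⟨n - 1, by omega⟩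
    refine iInf_le_of_le k (le_of_eq ?_)
    norm_num
  -- upper bound on limsup: for each m ≥ 1, limsup ≤ a m ^ (m⁻¹)
  have hup : ∀ m : ℕ, 1 ≤ m → limsup (fun n : ℕ => a n ^ ((n : ℝ)⁻¹)) atTop ≤ a m ^ ((m : ℝ)⁻¹) := by
    intro m hm
    rcases eq_or_ne (a m) 0 with h0 | h0
    · -- a n = 0 for n ≥ m + 1
      have hev : ∀ᶠ n : ℕ in atTop, a n ^ ((n : ℝ)⁻¹) = 0 := by
        filter_upwards [eventually_ge_atTop (m+1)] with n hn
        have : a n = 0 := by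
          have := h m (n - m) hm (by omega)
          rw [show m + (n - m) = n by omega] at this
          have hfin' := hfin (n - m) (by omega)
          have : a n ≤ 0 := by simpa [h0] using this
          exact le_antisymm this zero_le
        rw [this, ENNReal.zero_rpow_of_pos (inv_pos.mpr (by exact_mod_cast (by omega : 0 < n)))]
      calc limsup (fun n : ℕ => a n ^ ((n : ℝ)⁻¹)) atTop
          ≤ limsup (fun _ : ℕ => (0:ℝ≥0∞)) atTop := limsup_le_limsup (hev.mono fun n hn => hn.le)
        _ = 0 := limsup_const 0
        _ ≤ _ := zero_le
    · -- 0 < a m < ∞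
      set B : ℝ≥0∞ := (Finset.Icc 1 m).sup a ⊔ 1 with hB
      have hB1 : 1 ≤ B := le_sup_right
      have hBfin : B ≠ ∞ := by
        have h1 : (Finset.Icc 1 m).sup a < ∞ := by
          rw [Finset.sup_lt_iff (by simp : (⊥:ℝ≥0∞) < ∞)]
          intro r hr
          exact hfin r (Finset.mem_Icc.mp hr).1
        exact (sup_lt_iff.mpr ⟨h1, by simp⟩).ne
      have hmfin : a m ≠ ∞ := (hfin m hm).ne
      set C : ℝ≥0∞ := (1 ⊔ (a m)⁻¹) * B with hC
      have hC1 : 1 ≤ C := by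
        calc (1:ℝ≥0∞) = 1 * 1 := (one_mul 1).symm
        _ ≤ C := mul_le_mul' le_sup_left hB1
      have hCfin : C ≠ ∞ := by
        refine ENNReal.mul_ne_top ?_ hBfin
        exact (sup_lt_iff.mpr ⟨ENNReal.one_lt_top,
          ENNReal.inv_lt_top.mpr (pos_iff_ne_zero.mpr h0)⟩).ne
      have hbound : ∀ n : ℕ, m + 1 ≤ n →
          a n ^ ((n : ℝ)⁻¹) ≤ a m ^ ((m : ℝ)⁻¹) * C ^ ((n : ℝ)⁻¹) := by
        intro n hn
        set q := (n - 1) / m with hq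
        set r := (n - 1) % m + 1 with hr
        have h1 := Nat.div_add_mod (n - 1) m
        rw [← hq] at h1
        have h2 : (n - 1) % m < m := Nat.mod_lt _ (by omega)
        have hrlb : 1 ≤ r := by omega
        have hrub : r ≤ m := by omega
        have hnqr : n = q * m + r := by rw [hr, mul_comm]; omega
        have hq1 : 1 ≤ q := Nat.one_le_div_iff (by omega) |>.mpr (by omega)
        have han : a n ≤ a m ^ q * B := by
          calc a n = a (q * m + r) := by rw [← hnqr]
          _ ≤ a m ^ q * a r := pow_div_aux a h hm q r hrlb
          _ ≤ a m ^ q * B := by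
              refine mul_le_mul_right (le_trans (Finset.le_sup ?_) le_sup_left) _
              exact Finset.mem_Icc.mpr ⟨hrlb, hrub⟩
        have hnR : (0:ℝ) < (n:ℝ) := by exact_mod_cast (by omega : 0 < n)
        have hmR : (0:ℝ) < (m:ℝ) := by exact_mod_cast (by omega : 0 < m)
        have hinv : (0:ℝ) ≤ (n:ℝ)⁻¹ := by positivity
        calc a n ^ ((n : ℝ)⁻¹) ≤ (a m ^ q * B) ^ ((n : ℝ)⁻¹) :=
              ENNReal.rpow_le_rpow han hinv
        _ = (a m ^ q) ^ ((n : ℝ)⁻¹) * B ^ ((n : ℝ)⁻¹) :=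
              ENNReal.mul_rpow_of_nonneg _ _ hinv
        _ = a m ^ ((q : ℝ) * (n : ℝ)⁻¹) * B ^ ((n : ℝ)⁻¹) := by
              rw [← ENNReal.rpow_natCast (a m) q, ← ENNReal.rpow_mul]
        _ = a m ^ ((m : ℝ)⁻¹) * a m ^ ((q : ℝ) * (n : ℝ)⁻¹ - (m : ℝ)⁻¹) * B ^ ((n : ℝ)⁻¹) := by
              rw [← ENNReal.rpow_add _ _ h0 hmfin]
              ring_nf
        _ ≤ a m ^ ((m : ℝ)⁻¹) * (1 ⊔ (a m)⁻¹) ^ ((n : ℝ)⁻¹) * B ^ ((n : ℝ)⁻¹) := by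
              refine mul_le_mul_left (mul_le_mul_right ?_ _) _
              have hexp : (q : ℝ) * (n : ℝ)⁻¹ - (m : ℝ)⁻¹ = -((r : ℝ) / ((n:ℝ) * (m:ℝ))) := by
                have : (n : ℝ) = (q : ℝ) * (m : ℝ) + (r : ℝ) := by exact_mod_cast hnqr
                field_simp
                nlinarith [this]
              rw [hexp, ENNReal.rpow_neg, ← ENNReal.inv_rpow]
              calc ((a m)⁻¹) ^ ((r : ℝ) / ((n:ℝ) * (m:ℝ)))
                  ≤ (1 ⊔ (a m)⁻¹) ^ ((r : ℝ) / ((n:ℝ) * (m:ℝ))) :=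
                    ENNReal.rpow_le_rpow le_sup_right (by positivity)
                _ ≤ (1 ⊔ (a m)⁻¹) ^ ((n : ℝ)⁻¹) := by
                    refine ENNReal.rpow_le_rpow_of_exponent_le le_sup_left ?_
                    rw [div_le_iff₀ (by positivity)]
                    calc (r:ℝ) ≤ (m:ℝ) := by exact_mod_cast hrub
                    _ = (n:ℝ)⁻¹ * ((n:ℝ) * (m:ℝ)) := by field_simp
        _ = a m ^ ((m : ℝ)⁻¹) * C ^ ((n : ℝ)⁻¹) := by
              rw [hC, ENNReal.mul_rpow_of_nonneg _ _ hinv, mul_assoc]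
      -- C ^ (n⁻¹) → 1
      have hCt : Tendsto (fun n : ℕ => C ^ ((n : ℝ)⁻¹)) atTop (nhds 1) := by
        have hCpos : 0 < C.toReal :=
          ENNReal.toReal_pos (zero_lt_one.trans_le hC1).ne' hCfin
        have key : ∀ n : ℕ, C ^ ((n : ℝ)⁻¹) =
            ENNReal.ofReal (Real.exp (Real.log C.toReal * (n : ℝ)⁻¹)) := by
          intro n
          rw [← Real.rpow_def_of_pos hCpos, ← ENNReal.ofReal_rpow_of_pos hCpos,
            ENNReal.ofReal_toReal hCfin]
        have h0' : Tendsto (fun n : ℕ => Real.log C.toReal * (n : ℝ)⁻¹) atTop (nhds 0) := by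
          simpa using tendsto_inv_atTop_nhds_zero_nat.const_mul (Real.log C.toReal)
        have := (ENNReal.continuous_ofReal.tendsto _).comp
          ((Real.continuous_exp.tendsto _).comp h0')
        simp only [Function.comp_def, Real.exp_zero, ENNReal.ofReal_one] at this
        simpa [key] using this
      have htend : Tendsto (fun n : ℕ => a m ^ ((m : ℝ)⁻¹) * C ^ ((n : ℝ)⁻¹)) atTop
          (nhds (a m ^ ((m : ℝ)⁻¹))) := by
        have h2 : Tendsto (fun n : ℕ => a m ^ ((m : ℝ)⁻¹) * C ^ ((n : ℝ)⁻¹)) atTop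
            (nhds (a m ^ ((m : ℝ)⁻¹) * 1)) :=
          ENNReal.Tendsto.const_mul hCt (Or.inl one_ne_zero)
        simpa using h2
      calc limsup (fun n : ℕ => a n ^ ((n : ℝ)⁻¹)) atTop
          ≤ limsup (fun n : ℕ => a m ^ ((m : ℝ)⁻¹) * C ^ ((n : ℝ)⁻¹)) atTop := by
            refine limsup_le_limsup ?_
            filter_upwards [eventually_ge_atTop (m+1)] with n hn using hbound n hn
        _ = a m ^ ((m : ℝ)⁻¹) := htend.limsup_eq
  refine tendsto_of_le_liminf_of_limsup_le ?_ ?_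
  · refine le_liminf_of_le ?_ ?_
    · isBoundedDefault
    · filter_upwards [eventually_ge_atTop 1] with n hn using hlow n hn
  · refine le_iInf fun k => hup (k+1) (by omega) |>.trans_eq ?_
    norm_num

end Fekete

noncomputable section AuxAll
section Aux
set_option linter.unusedSectionVars false
open MeasureTheory ENNReal Filter
variable {X : Type*} [MetricSpace X] [MeasurableSpace X]

lemma expNegE_nonneg (t : ℝ≥0∞) : 0 ≤ expNegE t := by
  unfold expNegE; split <;> positivity

lemma expNegE_le_one (t : ℝ≥0∞) : expNegE t ≤ 1 := by
  unfold expNegE; split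
  · norm_num
  · exact Real.exp_le_one_iff.mpr (by simp [ENNReal.toReal_nonneg])

lemma measurable_expNegE : Measurable expNegE := by
  unfold expNegE
  exact Measurable.ite (measurableSet_singleton ∞) measurable_const
    ((Real.continuous_exp.measurable).comp (ENNReal.measurable_toReal.neg))

lemma pairWt_le_one (φ : X → X → ℝ≥0∞) (x y : X) : pairWt φ x y ≤ 1 := by
  unfold pairWt
  rw [show (1 : ℝ≥0∞) = ENNReal.ofReal 1 by simp]
  exact ENNReal.ofReal_le_ofReal (by linarith [expNegE_nonneg (φ x y)])

lemma measurable_pairWt {φ : X → X → ℝ≥0∞} (hφ : Measurable (Function.uncurry φ)) :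
    Measurable (Function.uncurry (pairWt φ)) := by
  unfold pairWt Function.uncurry
  exact ENNReal.measurable_ofReal.comp
    ((measurable_const.sub (measurable_expNegE.comp hφ)))

/-- The `j`-th factor in the integrand of `VK`. -/
noncomputable def pterm (φ : X → X → ℝ≥0∞) (γ : ∀ n : ℕ, (Fin (n + 1) → X) → ℝ) (n : ℕ) (j : Fin n)
    (w : Fin (n + 1) → X) : ℝ≥0∞ :=
  ENNReal.ofReal (γ (j.1 + 1) fun i : Fin (j.1 + 2) =>
      w ⟨i.1, by have h1 := i.isLt; have h2 := j.isLt; omega⟩) *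
    pairWt φ (w j.succ) (w j.castSucc)

lemma VK_eq (μ : Measure X) (φ : X → X → ℝ≥0∞) (γ : ∀ n : ℕ, (Fin (n + 1) → X) → ℝ) (k : ℕ) :
    VK μ φ γ k = ⨆ v0 : X, ∫⁻ v : Fin k → X, ∏ j : Fin k, pterm φ γ k j (tupCons v0 v)
      ∂(Measure.pi fun _ : Fin k => μ) := rfl

lemma measurable_prod_pterm {φ : X → X → ℝ≥0∞} (hφ : Measurable (Function.uncurry φ))
    {γ : ∀ n : ℕ, (Fin (n + 1) → X) → ℝ} (hγ : ∀ n, Measurable (γ n)) (n : ℕ) :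
    Measurable (fun w : Fin (n + 1) → X => ∏ j : Fin n, pterm φ γ n j w) := by
  refine Finset.measurable_prod _ fun j _ => ?_
  unfold pterm
  refine Measurable.fun_mul ?_ ?_
  · refine ENNReal.measurable_ofReal.comp ((hγ (j.1 + 1)).comp ?_)
    exact measurable_pi_lambda _ fun i => measurable_pi_apply _
  · have : (fun w : Fin (n+1) → X => pairWt φ (w j.succ) (w j.castSucc)) =
        (Function.uncurry (pairWt φ)) ∘ (fun w => (w j.succ, w j.castSucc)) := rfl
    rw [this]
    exact (measurable_pairWt hφ).comp
      ((measurable_pi_apply _).prodMk (measurable_pi_apply _))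

lemma measurable_tupCons {α : Type*} [MeasurableSpace α] {k : ℕ} {f : α → X}
    {g : α → Fin k → X} (hf : Measurable f) (hg : Measurable g) :
    Measurable (fun a => tupCons (f a) (g a)) := by
  unfold tupCons
  refine measurable_pi_lambda _ fun i => ?_
  refine Fin.cases ?_ ?_ i
  · simpa using hf
  · intro j; simpa [Function.comp_def] using (measurable_pi_apply j).comp hg
end Aux

section Aux2
set_option linter.unusedSectionVars false
open MeasureTheory ENNReal Filter
variable {X : Type*} [MetricSpace X] [MeasurableSpace X]

lemma gamma_congr (γ : ∀ n : ℕ, (Fin (n + 1) → X) → ℝ) {n m : ℕ} (h : n = m)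
    (v : Fin (n + 1) → X) :
    γ n v = γ m fun i : Fin (m + 1) => v ⟨i.1, by omega⟩ := by
  subst h
  congr 1

lemma gamma_drop {γ : ∀ n : ℕ, (Fin (n + 1) → X) → ℝ} (hγ : IsDamping γ) :
    ∀ (k : ℕ) {N n : ℕ} (h : N = k + n) (v : Fin (N + 1) → X),
    γ N v ≤ γ n fun i : Fin (n + 1) => v ⟨k + i.1, by omega⟩ := by
  intro k
  induction k with
  | zero =>
    intro N n h v
    subst h
    rw [gamma_congr γ (Nat.zero_add n) v]
    exact le_of_eq (congrArg _ (funext fun i => congrArg v (Fin.ext (by simp))))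
  | succ k ih =>
    intro N n h v
    subst h
    have h1 : k + 1 + n = (k + n) + 1 := by omega
    rw [gamma_congr γ h1 v]
    set v' : Fin (k + n + 1 + 1) → X := fun i : Fin (k + n + 1 + 1) =>
      v ⟨i.1, by have := i.isLt; omega⟩ with hv'
    calc γ (k + n + 1) v' ≤ γ (k + n) fun i => v' i.succ := hγ.2.2.2 (k + n) v'
    _ ≤ γ n fun i : Fin (n + 1) => (fun j : Fin (k + n + 1) => v' j.succ)
          ⟨k + i.1, by have := i.isLt; omega⟩ := ih rfl _
    _ = γ n fun i : Fin (n + 1) => v ⟨k + 1 + i.1, by have := i.isLt; omega⟩ := by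
        refine congrArg _ (funext fun i => ?_)
        show v' (Fin.succ ⟨k + i.1, _⟩) = _
        rw [hv']
        exact congrArg v (Fin.ext (by simp [Fin.succ]; omega))

lemma prod_pterm_split {φ : X → X → ℝ≥0∞} {γ : ∀ n : ℕ, (Fin (n + 1) → X) → ℝ}
    (hγ : IsDamping γ) (k ℓ : ℕ) (w : Fin (k + ℓ + 1) → X) :
    ∏ j : Fin (k + ℓ), pterm φ γ (k + ℓ) j w ≤
      (∏ j : Fin k, pterm φ γ k j fun i : Fin (k + 1) => w ⟨i.1, by have := i.isLt; omega⟩) *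
      ∏ j : Fin ℓ, pterm φ γ ℓ j fun i : Fin (ℓ + 1) => w ⟨k + i.1, by have := i.isLt; omega⟩ := by
  rw [Fin.prod_univ_add]
  refine mul_le_mul' (le_of_eq (Finset.prod_congr rfl fun j _ => rfl)) ?_
  refine Finset.prod_le_prod' fun j _ => ?_
  show pterm φ γ (k + ℓ) (Fin.natAdd k j) w ≤ _
  unfold pterm
  refine mul_le_mul' (ENNReal.ofReal_le_ofReal ?_) (le_of_eq rfl)
  exact gamma_drop hγ k (N := (Fin.natAdd k j).1 + 1) (n := j.1 + 1) rfl _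
end Aux2

section Aux3
set_option linter.unusedSectionVars false
open MeasureTheory ENNReal Filter
variable {X : Type*} [MetricSpace X] [MeasurableSpace X]

lemma finAppend_eq (k ℓ : ℕ) (p : (Fin k → X) × (Fin ℓ → X)) :
    (MeasurableEquiv.piCongrLeft (fun _ : Fin (k + ℓ) => X) finSumFinEquiv)
      ((MeasurableEquiv.sumPiEquivProdPi fun _ : Fin k ⊕ Fin ℓ => X).symm p) =
    Fin.append p.1 p.2 := by
  funext i
  refine Fin.addCases (fun j => ?_) (fun j => ?_) i
  · rw [Fin.append_left]
    have h1 : Fin.castAdd ℓ j = finSumFinEquiv (Sum.inl j) := rfl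
    rw [h1, MeasurableEquiv.piCongrLeft_apply_apply]
    rfl
  · rw [Fin.append_right]
    have h1 : Fin.natAdd k j = finSumFinEquiv (Sum.inr j) := rfl
    rw [h1, MeasurableEquiv.piCongrLeft_apply_apply]
    rfl

lemma measurePreserving_finAppend (μ : Measure X) [SigmaFinite μ] (k ℓ : ℕ) :
    MeasurePreserving (fun p : (Fin k → X) × (Fin ℓ → X) => Fin.append p.1 p.2)
      ((Measure.pi fun _ : Fin k => μ).prod (Measure.pi fun _ : Fin ℓ => μ))
      (Measure.pi fun _ : Fin (k + ℓ) => μ) := by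
  have h1 := measurePreserving_sumPiEquivProdPi_symm (fun _ : Fin k ⊕ Fin ℓ => (μ : Measure X))
  have h2 := measurePreserving_piCongrLeft (fun _ : Fin (k + ℓ) => (μ : Measure X)) finSumFinEquiv
  have h3 := h2.comp h1
  have : (fun p : (Fin k → X) × (Fin ℓ → X) => Fin.append p.1 p.2) =
      (MeasurableEquiv.piCongrLeft (fun _ : Fin (k + ℓ) => X) finSumFinEquiv) ∘
        (MeasurableEquiv.sumPiEquivProdPi fun _ : Fin k ⊕ Fin ℓ => X).symm := by
    funext p
    exact (finAppend_eq k ℓ p).symm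
  rw [this]
  exact h3

lemma tupCons_zero' {n : ℕ} (v0 : X) (v : Fin n → X) (h : 0 < n + 1) :
    tupCons v0 v ⟨0, h⟩ = v0 := rfl

lemma tupCons_succ' {n : ℕ} (v0 : X) (v : Fin n → X) (m : ℕ) (h : m + 1 < n + 1) :
    tupCons v0 v ⟨m + 1, h⟩ = v ⟨m, by omega⟩ := by
  have : (⟨m + 1, h⟩ : Fin (n + 1)) = Fin.succ ⟨m, by omega⟩ := rfl
  rw [this]
  exact Fin.cons_succ _ _ _
end Aux3

section Aux4
set_option linter.unusedSectionVars false
open MeasureTheory ENNReal Filter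
variable {X : Type*} [MetricSpace X] [MeasurableSpace X]

set_option maxHeartbeats 2000000 in
lemma VK_submul (μ : Measure X) [SigmaFinite μ] {φ : X → X → ℝ≥0∞}
    (hφ : Measurable (Function.uncurry φ)) {γ : ∀ n : ℕ, (Fin (n + 1) → X) → ℝ}
    (hγ : IsDamping γ) (k ℓ : ℕ) (hk : 1 ≤ k) :
    VK μ φ γ (k + ℓ) ≤ VK μ φ γ k * VK μ φ γ ℓ := by
  obtain ⟨k, rfl⟩ : ∃ k', k = k' + 1 := ⟨k - 1, by omega⟩
  set k' := k + 1 with hk'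
  rw [VK_eq μ φ γ (k' + ℓ)]
  refine iSup_le fun v0 => ?_
  have hmr : Measurable (fun a : Fin k' → X => a ⟨k, by omega⟩) := measurable_pi_apply _
  have hmF1 : Measurable (fun a : Fin k' → X => ∏ j : Fin k', pterm φ γ k' j (tupCons v0 a)) :=
    (measurable_prod_pterm hφ hγ.1 k').comp (measurable_tupCons measurable_const measurable_id)
  have hmF2 : Measurable (fun p : (Fin k' → X) × (Fin ℓ → X) =>
      ∏ j : Fin ℓ, pterm φ γ ℓ j (tupCons (p.1 ⟨k, by omega⟩) p.2)) :=
    (measurable_prod_pterm hφ hγ.1 ℓ).comp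
      (measurable_tupCons (hmr.comp measurable_fst) measurable_snd)
  have hpt : ∀ p : (Fin k' → X) × (Fin ℓ → X),
      (∏ j : Fin (k' + ℓ), pterm φ γ (k' + ℓ) j (tupCons v0 (Fin.append p.1 p.2))) ≤
        (∏ j : Fin k', pterm φ γ k' j (tupCons v0 p.1)) *
          ∏ j : Fin ℓ, pterm φ γ ℓ j (tupCons (p.1 ⟨k, by omega⟩) p.2) := by
    rintro ⟨a, b⟩
    refine (prod_pterm_split hγ k' ℓ _).trans (le_of_eq ?_)
    have e1 : (fun i : Fin (k' + 1) => tupCons v0 (Fin.append a b)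
        ⟨i.1, by have := i.isLt; omega⟩) = tupCons v0 a := by
      funext i
      match i with
      | ⟨0, h⟩ => rfl
      | ⟨m + 1, h⟩ =>
        rw [tupCons_succ' v0 (Fin.append a b) m (by omega), tupCons_succ' v0 a m h]
        have hmk : m < k' := by omega
        have : (⟨m, by omega⟩ : Fin (k' + ℓ)) = Fin.castAdd ℓ ⟨m, hmk⟩ := rfl
        rw [this, Fin.append_left]
    have e2 : (fun i : Fin (ℓ + 1) => tupCons v0 (Fin.append a b)
        ⟨k' + i.1, by have := i.isLt; omega⟩) = tupCons (a ⟨k, by omega⟩) b := by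
      funext i
      match i with
      | ⟨0, h⟩ =>
        show tupCons v0 (Fin.append a b) ⟨k + 1, by omega⟩ = a ⟨k, by omega⟩
        rw [tupCons_succ' v0 (Fin.append a b) k (by omega)]
        have : (⟨k, by omega⟩ : Fin (k' + ℓ)) = Fin.castAdd ℓ ⟨k, by omega⟩ := rfl
        rw [this, Fin.append_left]
      | ⟨m + 1, h⟩ =>
        show tupCons v0 (Fin.append a b) ⟨k' + m + 1, by omega⟩ = tupCons (a ⟨k, by omega⟩) b ⟨m + 1, h⟩
        rw [tupCons_succ' v0 (Fin.append a b) (k' + m) (by omega),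
          tupCons_succ' (a ⟨k, by omega⟩) b m h]
        have hmℓ : m < ℓ := by omega
        have : (⟨k' + m, by omega⟩ : Fin (k' + ℓ)) = Fin.natAdd k' ⟨m, hmℓ⟩ := rfl
        rw [this, Fin.append_right]
    rw [e1, e2]
  have hMP := measurePreserving_finAppend μ k' ℓ
  have hmInt : Measurable (fun v : Fin (k' + ℓ) → X =>
      ∏ j : Fin (k' + ℓ), pterm φ γ (k' + ℓ) j (tupCons v0 v)) :=
    (measurable_prod_pterm hφ hγ.1 (k' + ℓ)).comp
      (measurable_tupCons measurable_const measurable_id)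
  calc ∫⁻ v, ∏ j : Fin (k' + ℓ), pterm φ γ (k' + ℓ) j (tupCons v0 v)
        ∂(Measure.pi fun _ : Fin (k' + ℓ) => μ)
      = ∫⁻ p, (∏ j : Fin (k' + ℓ), pterm φ γ (k' + ℓ) j (tupCons v0 (Fin.append p.1 p.2)))
          ∂((Measure.pi fun _ : Fin k' => μ).prod (Measure.pi fun _ : Fin ℓ => μ)) :=
        (hMP.lintegral_comp hmInt).symm
    _ ≤ ∫⁻ p, (∏ j : Fin k', pterm φ γ k' j (tupCons v0 p.1)) *
          ∏ j : Fin ℓ, pterm φ γ ℓ j (tupCons (p.1 ⟨k, by omega⟩) p.2)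
          ∂((Measure.pi fun _ : Fin k' => μ).prod (Measure.pi fun _ : Fin ℓ => μ)) :=
        lintegral_mono hpt
    _ = ∫⁻ a, ∫⁻ b, (∏ j : Fin k', pterm φ γ k' j (tupCons v0 a)) *
          ∏ j : Fin ℓ, pterm φ γ ℓ j (tupCons (a ⟨k, by omega⟩) b)
          ∂(Measure.pi fun _ : Fin ℓ => μ) ∂(Measure.pi fun _ : Fin k' => μ) :=
        lintegral_prod _ ((hmF1.comp measurable_fst).mul hmF2).aemeasurable
    _ ≤ ∫⁻ a, (∏ j : Fin k', pterm φ γ k' j (tupCons v0 a)) * VK μ φ γ ℓ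
          ∂(Measure.pi fun _ : Fin k' => μ) := by
        refine lintegral_mono fun a => ?_
        rw [lintegral_const_mul (f := fun b => ∏ j : Fin ℓ, pterm φ γ ℓ j
          (tupCons (a ⟨k, by omega⟩) b)) _ (hmF2.comp measurable_prodMk_left)]
        refine mul_le_mul_right ?_ _
        rw [VK_eq]
        exact le_iSup (fun r => ∫⁻ b, ∏ j : Fin ℓ, pterm φ γ ℓ j (tupCons r b)
          ∂(Measure.pi fun _ : Fin ℓ => μ)) (a ⟨k, by omega⟩)
    _ = (∫⁻ a, ∏ j : Fin k', pterm φ γ k' j (tupCons v0 a)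
          ∂(Measure.pi fun _ : Fin k' => μ)) * VK μ φ γ ℓ :=
        lintegral_mul_const _ hmF1
    _ ≤ VK μ φ γ k' * VK μ φ γ ℓ := by
        refine mul_le_mul_left ?_ _
        rw [VK_eq]
        exact le_iSup (fun w => ∫⁻ a, ∏ j : Fin k', pterm φ γ k' j (tupCons w a)
          ∂(Measure.pi fun _ : Fin k' => μ)) v0
end Aux4

section Aux5
set_option linter.unusedSectionVars false
open MeasureTheory ENNReal Filter
variable {X : Type*} [MetricSpace X] [MeasurableSpace X]

lemma VK_one_le (μ : Measure X) [SigmaFinite μ] {φ : X → X → ℝ≥0∞}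
    (hφ : Measurable (Function.uncurry φ)) {γ : ∀ n : ℕ, (Fin (n + 1) → X) → ℝ}
    (hγ : IsDamping γ) : VK μ φ γ 1 ≤ CPhi μ φ := by
  rw [VK_eq]
  refine iSup_le fun v0 => ?_
  have h1 : ∀ v : Fin 1 → X, ∏ j : Fin 1, pterm φ γ 1 j (tupCons v0 v) ≤ pairWt φ (v 0) v0 := by
    intro v
    rw [Fin.prod_univ_one]
    unfold pterm
    calc ENNReal.ofReal (γ ((0 : Fin 1).1 + 1) fun i : Fin ((0 : Fin 1).1 + 2) =>
            tupCons v0 v ⟨i.1, by have h1 := i.isLt; have h2 := (0 : Fin 1).isLt; omega⟩) *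
          pairWt φ (tupCons v0 v (0 : Fin 1).succ) (tupCons v0 v (0 : Fin 1).castSucc)
        ≤ 1 * pairWt φ (tupCons v0 v (0 : Fin 1).succ) (tupCons v0 v (0 : Fin 1).castSucc) :=
          mul_le_mul_left (ENNReal.ofReal_le_one.mpr (hγ.2.1 _ _).2) _
      _ = pairWt φ (v 0) v0 := by
          rw [one_mul]
          congr 1
  have hf : Measurable (fun x : X => pairWt φ x v0) :=
    (measurable_pairWt hφ).comp (measurable_id.prodMk measurable_const)
  calc ∫⁻ v : Fin 1 → X, ∏ j : Fin 1, pterm φ γ 1 j (tupCons v0 v)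
        ∂(Measure.pi fun _ : Fin 1 => μ)
      ≤ ∫⁻ v : Fin 1 → X, pairWt φ (v 0) v0 ∂(Measure.pi fun _ : Fin 1 => μ) :=
        lintegral_mono h1
    _ = ∫⁻ x, pairWt φ x v0 ∂μ :=
        (measurePreserving_funUnique μ (Fin 1)).lintegral_comp hf
    _ ≤ CPhi μ φ := le_iSup (fun v => ∫⁻ x, pairWt φ x v ∂μ) v0

lemma VK_lt_top (μ : Measure X) [SigmaFinite μ] {φ : X → X → ℝ≥0∞}
    (hφ : Measurable (Function.uncurry φ)) (hT : Tempered μ φ)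
    {γ : ∀ n : ℕ, (Fin (n + 1) → X) → ℝ} (hγ : IsDamping γ) :
    ∀ k : ℕ, 1 ≤ k → VK μ φ γ k < ∞ := by
  intro k hk
  induction k, hk using Nat.le_induction with
  | base => exact lt_of_le_of_lt (VK_one_le μ hφ hγ) hT
  | succ n hn ih =>
    calc VK μ φ γ (n + 1) ≤ VK μ φ γ n * VK μ φ γ 1 := VK_submul μ hφ hγ n 1 hn
    _ < ∞ := ENNReal.mul_lt_top ih (lt_of_le_of_lt (VK_one_le μ hφ hγ) hT)
end Aux5

end AuxAll

/-- For a repulsive tempered pair potential `φ` and a damping function `γ`,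
the quantities `V_k(γ)` are submultiplicative: `V_{k+ℓ}(γ) ≤ V_k(γ) · V_ℓ(γ)` for `k, ℓ ≥ 1`;
consequently `lim_{k→∞} V_k(γ)^{1/k}` exists and equals `inf_{k≥1} V_k(γ)^{1/k} = Δ_φ(γ)`. -/
theorem VK_submultiplicative_tendsto_inf
    {X : Type*} [MetricSpace X] [CompleteSpace X] [TopologicalSpace.SeparableSpace X]
    [MeasurableSpace X] [BorelSpace X]
    (μ : Measure X) [IsLocallyFiniteMeasure μ] [SigmaFinite μ]
    (φ : X → X → ℝ≥0∞) (hφ : IsRepulsivePotential φ) (hT : Tempered μ φ)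
    (γ : ∀ n : ℕ, (Fin (n + 1) → X) → ℝ) (hγ : IsDamping γ) :
    (∀ k ℓ : ℕ, 1 ≤ k → 1 ≤ ℓ → VK μ φ γ (k + ℓ) ≤ VK μ φ γ k * VK μ φ γ ℓ) ∧
    Filter.Tendsto (fun k : ℕ => VK μ φ γ k ^ ((k : ℝ)⁻¹)) Filter.atTop
      (nhds (DeltaPhi μ φ γ)) := by
  have h1 : ∀ k ℓ : ℕ, 1 ≤ k → 1 ≤ ℓ → VK μ φ γ (k + ℓ) ≤ VK μ φ γ k * VK μ φ γ ℓ :=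
    fun k ℓ hk _ => VK_submul μ hφ.2 hγ k ℓ hk
  exact ⟨h1, fekete_ennreal (VK μ φ γ) h1 (VK_lt_top μ hφ.2 hT hγ)⟩
end

section
/- Let φ be a repulsive tempered pair potential on (X,d,μ). For v ∈ X, λ ≥ 0 and a bounded measurable function ρ : X → [0,∞), set g_v(λ,ρ) := √(λ·exp(−∫_X (1 − e^{−φ(v,w)})·ρ(w)² dμ(w))). Then for any two bounded measurable functions x, y : X → [0,∞): |g_v(λ,x) − g_v(λ,y)|² ≤ e^{−1}·λ·∫_X (1 − e^{−φ(v,w)})·|y(w) − x(w)|² dμ(w). -/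
open MeasureTheory ENNReal Filter

section Aux

open MeasureTheory ENNReal

private lemma exp_neg_sq_half_lipschitz (u w : ℝ) :
    |Real.exp (-(u ^ 2 / 2)) - Real.exp (-(w ^ 2 / 2))| ≤ Real.exp (-(1 / 2)) * |u - w| := by
  have hd : ∀ t : ℝ, HasDerivWithinAt (fun s : ℝ => Real.exp (-(s ^ 2 / 2)))
      (Real.exp (-(t ^ 2 / 2)) * (-t)) Set.univ t := by
    intro t
    have h1 := ((hasDerivAt_pow 2 t).div_const 2).neg
    rw [show -((2 : ℕ) * t ^ (2 - 1) / 2) = -t by push_cast; ring] at h1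
    exact h1.exp.hasDerivWithinAt
  have bound : ∀ t : ℝ, ‖Real.exp (-(t ^ 2 / 2)) * (-t)‖ ≤ Real.exp (-(1 / 2)) := by
    intro t
    have h1 : t ^ 2 * Real.exp (-(t ^ 2)) ≤ Real.exp (-1) := by
      have h2 : (t ^ 2 : ℝ) ≤ Real.exp (t ^ 2 - 1) := by
        have := Real.add_one_le_exp (t ^ 2 - 1); linarith
      have h3 : Real.exp (-(t ^ 2)) > 0 := Real.exp_pos _
      calc t ^ 2 * Real.exp (-(t ^ 2)) ≤ Real.exp (t ^ 2 - 1) * Real.exp (-(t ^ 2)) := by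
            exact mul_le_mul_of_nonneg_right h2 h3.le
        _ = Real.exp (-1) := by rw [← Real.exp_add]; ring_nf
    rw [Real.norm_eq_abs, abs_mul, abs_neg, abs_of_pos (Real.exp_pos _)]
    have hs : (Real.exp (-(t ^ 2 / 2)) * |t|) ^ 2 ≤ (Real.exp (-(1 / 2))) ^ 2 := by
      have e1 : (Real.exp (-(t ^ 2 / 2))) ^ 2 = Real.exp (-(t ^ 2)) := by
        rw [sq, ← Real.exp_add]; ring_nf
      have e2 : (Real.exp (-(1 / 2) : ℝ)) ^ 2 = Real.exp (-1) := by
        rw [sq, ← Real.exp_add]; norm_num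
      calc (Real.exp (-(t ^ 2 / 2)) * |t|) ^ 2 = t ^ 2 * Real.exp (-(t ^ 2)) := by
            rw [mul_pow, e1, sq_abs]; ring
        _ ≤ Real.exp (-1) := h1
        _ = (Real.exp (-(1 / 2) : ℝ)) ^ 2 := e2.symm
    exact (pow_le_pow_iff_left₀ (by positivity) (Real.exp_pos _).le (by norm_num)).mp hs
  have := Convex.norm_image_sub_le_of_norm_hasDerivWithin_le
    (f := fun s : ℝ => Real.exp (-(s ^ 2 / 2))) (f' := fun t => Real.exp (-(t ^ 2 / 2)) * (-t))
    (fun t _ => hd t) (fun t _ => bound t) convex_univ (Set.mem_univ w) (Set.mem_univ u)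
  simpa [Real.norm_eq_abs] using this

private lemma weighted_cauchy_schwarz {α : Type*} [MeasurableSpace α] (μ : Measure α)
    {W : α → ℝ≥0∞} {F G : α → ℝ} (hW : Measurable W) (hF : Measurable F) (hG : Measurable G)
    (hF0 : ∀ a, 0 ≤ F a) (hG0 : ∀ a, 0 ≤ G a) :
    ∫⁻ a, W a * ENNReal.ofReal (F a * G a) ∂μ ≤
      (∫⁻ a, W a * ENNReal.ofReal (F a ^ 2) ∂μ) ^ (1 / 2 : ℝ) *
        (∫⁻ a, W a * ENNReal.ofReal (G a ^ 2) ∂μ) ^ (1 / 2 : ℝ) := by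
  set f : α → ℝ≥0∞ := fun a => W a ^ (1 / 2 : ℝ) * ENNReal.ofReal (F a)
  set g : α → ℝ≥0∞ := fun a => W a ^ (1 / 2 : ℝ) * ENNReal.ofReal (G a)
  have hfm : AEMeasurable f μ :=
    ((hW.pow_const _).mul (ENNReal.measurable_ofReal.comp hF)).aemeasurable
  have hgm : AEMeasurable g μ :=
    ((hW.pow_const _).mul (ENNReal.measurable_ofReal.comp hG)).aemeasurable
  have hpq : Real.HolderConjugate 2 2 := ⟨by norm_num, by norm_num, by norm_num⟩
  have key := ENNReal.lintegral_mul_le_Lp_mul_Lq μ hpq hfm hgm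
  have e1 : ∀ a, (f * g) a = W a * ENNReal.ofReal (F a * G a) := by
    intro a
    simp only [Pi.mul_apply, f, g]
    rw [mul_mul_mul_comm, ← ENNReal.rpow_add_of_nonneg _ _ (by norm_num) (by norm_num),
      ENNReal.ofReal_mul (hF0 a)]
    norm_num
  have e2 : ∀ (H : α → ℝ), (∀ a, 0 ≤ H a) → ∀ a,
      (W a ^ (1 / 2 : ℝ) * ENNReal.ofReal (H a)) ^ (2 : ℝ) =
        W a * ENNReal.ofReal (H a ^ 2) := by
    intro H hH0 a
    rw [ENNReal.mul_rpow_of_nonneg _ _ (by norm_num), ← ENNReal.rpow_mul,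
      show (2 : ℝ) = ((2 : ℕ) : ℝ) by norm_num, ENNReal.rpow_natCast,
      ← ENNReal.ofReal_pow (hH0 a)]
    norm_num
  calc ∫⁻ a, W a * ENNReal.ofReal (F a * G a) ∂μ = ∫⁻ a, (f * g) a ∂μ := by
        exact lintegral_congr fun a => (e1 a).symm
    _ ≤ (∫⁻ a, f a ^ (2 : ℝ) ∂μ) ^ (1 / 2 : ℝ) * (∫⁻ a, g a ^ (2 : ℝ) ∂μ) ^ (1 / 2 : ℝ) := key
    _ = (∫⁻ a, W a * ENNReal.ofReal (F a ^ 2) ∂μ) ^ (1 / 2 : ℝ) *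
        (∫⁻ a, W a * ENNReal.ofReal (G a ^ 2) ∂μ) ^ (1 / 2 : ℝ) := by
        rw [lintegral_congr (e2 F hF0), lintegral_congr (e2 G hG0)]

end Aux

/-- For a repulsive tempered pair potential `φ`, `v ∈ X`, `λ ≥ 0` and
bounded measurable `ρ : X → [0,∞)` set
`g_v(λ,ρ) := √(λ · exp(−∫ (1−e^{−φ(v,w)}) ρ(w)² dμ(w)))`. Then for any two bounded
measurable `x, y : X → [0,∞)`:
`|g_v(λ,x) − g_v(λ,y)|² ≤ e⁻¹ λ ∫ (1−e^{−φ(v,w)}) |y(w) − x(w)|² dμ(w)`. -/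
theorem one_step_contraction
    {X : Type*} [MetricSpace X] [CompleteSpace X] [TopologicalSpace.SeparableSpace X]
    [MeasurableSpace X] [BorelSpace X]
    (μ : Measure X) [IsLocallyFiniteMeasure μ] [SigmaFinite μ]
    (φ : X → X → ℝ≥0∞) (hφ : IsRepulsivePotential φ) (hT : Tempered μ φ)
    (v : X) (lam : ℝ) (hlam : 0 ≤ lam)
    (x y : X → ℝ) (hx : Measurable x) (hy : Measurable y)
    (hx0 : ∀ w, 0 ≤ x w) (hy0 : ∀ w, 0 ≤ y w)
    (hxb : ∃ M, ∀ w, x w ≤ M) (hyb : ∃ M, ∀ w, y w ≤ M) :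
    ENNReal.ofReal
        (|Real.sqrt (lam * Real.exp
              (-(∫⁻ w, pairWt φ v w * ENNReal.ofReal ((x w) ^ 2) ∂μ).toReal)) -
          Real.sqrt (lam * Real.exp
              (-(∫⁻ w, pairWt φ v w * ENNReal.ofReal ((y w) ^ 2) ∂μ).toReal))| ^ 2) ≤
      ENNReal.ofReal ((Real.exp 1)⁻¹ * lam) *
        ∫⁻ w, pairWt φ v w * ENNReal.ofReal ((y w - x w) ^ 2) ∂μ := by
  classical
  obtain ⟨hsym, hmeas⟩ := hφ
  obtain ⟨MxO, hMx0⟩ := hxb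
  obtain ⟨MyO, hMy0⟩ := hyb
  set Mx : ℝ := max MxO 0 with hMxdef
  set My : ℝ := max MyO 0 with hMydef
  have hMx : ∀ w, x w ≤ Mx := fun w => le_max_of_le_left (hMx0 w)
  have hMy : ∀ w, y w ≤ My := fun w => le_max_of_le_left (hMy0 w)
  have hMx0' : (0 : ℝ) ≤ Mx := le_max_right _ _
  have hMy0' : (0 : ℝ) ≤ My := le_max_right _ _
  set W : X → ℝ≥0∞ := fun w => pairWt φ v w with hWdef
  have hexpm : Measurable expNegE := by
    unfold expNegE
    have hset : MeasurableSet {t : ℝ≥0∞ | t = ∞} := by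
      simpa [Set.setOf_eq_eq_singleton] using MeasurableSet.singleton (∞ : ℝ≥0∞)
    exact Measurable.ite hset measurable_const
      (Real.measurable_exp.comp ENNReal.measurable_toReal.neg)
  have hWmeas : Measurable W := by
    have h1 : Measurable fun w => φ v w := hmeas.comp measurable_prodMk_left
    exact ENNReal.measurable_ofReal.comp ((measurable_const.sub (hexpm.comp h1)))
  have hWint : ∫⁻ w, W w ∂μ ≠ ∞ := by
    have heq : ∫⁻ w, W w ∂μ = ∫⁻ w, pairWt φ w v ∂μ := by
      refine lintegral_congr fun w => ?_
      simp only [hWdef, pairWt, hsym v w]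
    rw [heq]
    exact ((le_iSup (fun u => ∫⁻ z, pairWt φ z u ∂μ) v).trans_lt hT).ne
  have hfin : ∀ (f : X → ℝ) (c : ℝ), (∀ w, f w ≤ c) →
      ∫⁻ w, W w * ENNReal.ofReal (f w) ∂μ ≠ ∞ := by
    intro f c hc
    have h1 : ∫⁻ w, W w * ENNReal.ofReal (f w) ∂μ ≤ ∫⁻ w, W w * ENNReal.ofReal c ∂μ :=
      lintegral_mono fun w => mul_le_mul_right (ENNReal.ofReal_le_ofReal (hc w)) _
    refine (h1.trans_lt ?_).ne
    rw [lintegral_mul_const _ hWmeas]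
    exact ENNReal.mul_lt_top hWint.lt_top ENNReal.ofReal_lt_top
  set A := ∫⁻ w, W w * ENNReal.ofReal (x w ^ 2) ∂μ with hAdef
  set B := ∫⁻ w, W w * ENNReal.ofReal (y w ^ 2) ∂μ with hBdef
  set D := ∫⁻ w, W w * ENNReal.ofReal ((y w - x w) ^ 2) ∂μ with hDdef
  set C := ∫⁻ w, W w * ENNReal.ofReal (x w * y w) ∂μ with hCdef
  have hA : A ≠ ∞ := hfin _ (Mx ^ 2) fun w => pow_le_pow_left₀ (hx0 w) (hMx w) 2
  have hB : B ≠ ∞ := hfin _ (My ^ 2) fun w => pow_le_pow_left₀ (hy0 w) (hMy w) 2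
  have hD : D ≠ ∞ := hfin _ (Mx ^ 2 + My ^ 2) fun w => by
    nlinarith [hx0 w, hy0 w, hMx w, hMy w]
  have hC : C ≠ ∞ := hfin _ (Mx * My) fun w =>
    mul_le_mul (hMx w) (hMy w) (hy0 w) hMx0'
  have hmx2 : Measurable fun w => W w * ENNReal.ofReal (x w ^ 2) :=
    hWmeas.mul (ENNReal.measurable_ofReal.comp (hx.pow_const 2))
  have hmy2 : Measurable fun w => W w * ENNReal.ofReal (y w ^ 2) :=
    hWmeas.mul (ENNReal.measurable_ofReal.comp (hy.pow_const 2))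
  have hmd : Measurable fun w => W w * ENNReal.ofReal ((y w - x w) ^ 2) :=
    hWmeas.mul (ENNReal.measurable_ofReal.comp ((hy.sub hx).pow_const 2))
  -- A + B = D + 2 C
  have hsum : A + B = D + 2 * C := by
    have hpt : ∀ w, W w * ENNReal.ofReal (x w ^ 2) + W w * ENNReal.ofReal (y w ^ 2) =
        W w * ENNReal.ofReal ((y w - x w) ^ 2) + 2 * (W w * ENNReal.ofReal (x w * y w)) := by
      intro w
      have h2 : (2 : ℝ≥0∞) * (W w * ENNReal.ofReal (x w * y w)) =
          W w * ENNReal.ofReal (2 * (x w * y w)) := by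
        rw [ENNReal.ofReal_mul (by norm_num : (0:ℝ) ≤ 2), ENNReal.ofReal_ofNat]
        ring
      rw [h2, ← mul_add, ← mul_add, ← ENNReal.ofReal_add (by positivity) (by positivity),
        ← ENNReal.ofReal_add (by positivity) (by
          have := mul_nonneg (hx0 w) (hy0 w); positivity)]
      congr 1
      ring
    calc A + B = ∫⁻ w, (W w * ENNReal.ofReal (x w ^ 2) + W w * ENNReal.ofReal (y w ^ 2)) ∂μ := by
          rw [hAdef, hBdef, lintegral_add_left hmx2]
      _ = ∫⁻ w, (W w * ENNReal.ofReal ((y w - x w) ^ 2) +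
            2 * (W w * ENNReal.ofReal (x w * y w))) ∂μ := lintegral_congr hpt
      _ = D + 2 * C := by
          have hmc : Measurable fun w => W w * ENNReal.ofReal (x w * y w) :=
            hWmeas.mul (ENNReal.measurable_ofReal.comp (hx.mul hy))
          rw [lintegral_add_left hmd, lintegral_const_mul 2 hmc]
  have hCS : C ≤ A ^ (1 / 2 : ℝ) * B ^ (1 / 2 : ℝ) :=
    weighted_cauchy_schwarz μ hWmeas hx hy hx0 hy0
  -- pass to real numbers
  set a := A.toReal with hadef
  set b := B.toReal with hbdef
  set c := C.toReal with hcdef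
  set d := D.toReal with hddef
  have ha0 : 0 ≤ a := ENNReal.toReal_nonneg
  have hb0 : 0 ≤ b := ENNReal.toReal_nonneg
  have hc0 : 0 ≤ c := ENNReal.toReal_nonneg
  have hd0 : 0 ≤ d := ENNReal.toReal_nonneg
  have hsumR : a + b = d + 2 * c := by
    have := congrArg ENNReal.toReal hsum
    rwa [ENNReal.toReal_add hA hB, ENNReal.toReal_add hD (by
        exact ENNReal.mul_ne_top (by norm_num) hC),
      ENNReal.toReal_mul, ENNReal.toReal_ofNat] at this
  have hcsR : c ≤ Real.sqrt a * Real.sqrt b := by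
    have h1 : c ≤ (A ^ (1 / 2 : ℝ) * B ^ (1 / 2 : ℝ)).toReal :=
      ENNReal.toReal_mono (ENNReal.mul_ne_top
        (by simp [ENNReal.rpow_eq_top_iff, hA]) (by simp [ENNReal.rpow_eq_top_iff, hB])) hCS
    rwa [ENNReal.toReal_mul, ← ENNReal.toReal_rpow, ← ENNReal.toReal_rpow,
      ← Real.sqrt_eq_rpow, ← Real.sqrt_eq_rpow] at h1
  have hdge : (Real.sqrt a - Real.sqrt b) ^ 2 ≤ d := by
    nlinarith [Real.sq_sqrt ha0, Real.sq_sqrt hb0, hcsR, hsumR]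
  -- the real inequality
  have hs1 : Real.sqrt (lam * Real.exp (-a)) = Real.sqrt lam * Real.exp (-(a / 2)) := by
    rw [Real.sqrt_mul hlam, ← Real.exp_half]
    ring_nf
  have hs2 : Real.sqrt (lam * Real.exp (-b)) = Real.sqrt lam * Real.exp (-(b / 2)) := by
    rw [Real.sqrt_mul hlam, ← Real.exp_half]
    ring_nf
  have key1 : |Real.exp (-(a / 2)) - Real.exp (-(b / 2))| ≤
      Real.exp (-(1 / 2)) * |Real.sqrt a - Real.sqrt b| := by
    have := exp_neg_sq_half_lipschitz (Real.sqrt a) (Real.sqrt b)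
    rwa [Real.sq_sqrt ha0, Real.sq_sqrt hb0] at this
  have hreal : |Real.sqrt (lam * Real.exp (-a)) - Real.sqrt (lam * Real.exp (-b))| ^ 2 ≤
      (Real.exp 1)⁻¹ * lam * d := by
    have habs : |Real.sqrt (lam * Real.exp (-a)) - Real.sqrt (lam * Real.exp (-b))| =
        Real.sqrt lam * |Real.exp (-(a / 2)) - Real.exp (-(b / 2))| := by
      rw [hs1, hs2, ← mul_sub, abs_mul, abs_of_nonneg (Real.sqrt_nonneg _)]
    calc |Real.sqrt (lam * Real.exp (-a)) - Real.sqrt (lam * Real.exp (-b))| ^ 2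
        = lam * |Real.exp (-(a / 2)) - Real.exp (-(b / 2))| ^ 2 := by
          rw [habs, mul_pow, Real.sq_sqrt hlam]
      _ ≤ lam * (Real.exp (-(1 / 2)) * |Real.sqrt a - Real.sqrt b|) ^ 2 := by
          exact mul_le_mul_of_nonneg_left
            (pow_le_pow_left₀ (abs_nonneg _) key1 2) hlam
      _ = (Real.exp 1)⁻¹ * lam * (Real.sqrt a - Real.sqrt b) ^ 2 := by
          rw [mul_pow, sq_abs, sq, ← Real.exp_add, ← Real.exp_neg]
          norm_num
          ring
      _ ≤ (Real.exp 1)⁻¹ * lam * d := by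
          exact mul_le_mul_of_nonneg_left hdge
            (mul_nonneg (inv_nonneg.mpr (Real.exp_pos 1).le) hlam)
  -- conclude in ℝ≥0∞
  have hRHS : ENNReal.ofReal ((Real.exp 1)⁻¹ * lam) * D =
      ENNReal.ofReal ((Real.exp 1)⁻¹ * lam * d) := by
    rw [← ENNReal.ofReal_toReal hD, ← ENNReal.ofReal_mul
      (mul_nonneg (inv_nonneg.mpr (Real.exp_pos 1).le) hlam)]
  rw [hRHS]
  exact ENNReal.ofReal_le_ofReal hreal
end

section
/- For every real α > e, the function f_α : [0,1] → ℝ defined by f_α(y) = exp(−α·exp(−α·y)) − y has at least three zeros in (0,1): one in each of the intervals (0,1/α), (1/α,1/e), and (1/e,1). In particular, the map y ↦ exp(−α·exp(−α·y)) has at least three distinct fixed points in (0,1). -/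
private lemma key_ineq (α : ℝ) (hα : Real.exp 1 < α) :
    α < Real.exp (α / Real.exp 1) := by
  have he : (0:ℝ) < Real.exp 1 := Real.exp_pos 1
  have h1 : 1 < α / Real.exp 1 := (one_lt_div he).2 hα
  have h2 : α / Real.exp 1 - 1 + 1 < Real.exp (α / Real.exp 1 - 1) :=
    Real.add_one_lt_exp (by linarith)
  have h3 : Real.exp (α / Real.exp 1) = Real.exp 1 * Real.exp (α / Real.exp 1 - 1) := by
    rw [← Real.exp_add]; ring_nf
  have h4 : α = Real.exp 1 * (α / Real.exp 1) := by field_simp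
  nlinarith [mul_lt_mul_of_pos_left (by linarith : α / Real.exp 1 < Real.exp (α / Real.exp 1 - 1)) he]

private lemma ivt_zero (f : ℝ → ℝ) (hf : Continuous f) (a b : ℝ) (hab : a ≤ b)
    (ha : 0 < f a) (hb : f b < 0) : ∃ y ∈ Set.Ioo a b, f y = 0 := by
  have := intermediate_value_Ioo' hab hf.continuousOn (Set.mem_Ioo.2 ⟨hb, ha⟩)
  obtain ⟨y, hy, hy0⟩ := this
  exact ⟨y, hy, hy0⟩

private lemma ivt_zero' (f : ℝ → ℝ) (hf : Continuous f) (a b : ℝ) (hab : a ≤ b)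
    (ha : f a < 0) (hb : 0 < f b) : ∃ y ∈ Set.Ioo a b, f y = 0 := by
  have := intermediate_value_Ioo hab hf.continuousOn (Set.mem_Ioo.2 ⟨ha, hb⟩)
  obtain ⟨y, hy, hy0⟩ := this
  exact ⟨y, hy, hy0⟩

/-- For every real `α > e`, the function
`f_α(y) = exp(−α exp(−α y)) − y` has at least three zeros in `(0,1)`: one in each of
the intervals `(0, 1/α)`, `(1/α, 1/e)` and `(1/e, 1)`. Equivalently, the map
`y ↦ exp(−α exp(−α y))` has at least three distinct fixed points in `(0,1)`. -/
theorem three_fixed_points (α : ℝ) (hα : Real.exp 1 < α) :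
    (∃ y ∈ Set.Ioo (0 : ℝ) α⁻¹, Real.exp (-(α * Real.exp (-(α * y)))) - y = 0) ∧
    (∃ y ∈ Set.Ioo α⁻¹ (Real.exp 1)⁻¹, Real.exp (-(α * Real.exp (-(α * y)))) - y = 0) ∧
    (∃ y ∈ Set.Ioo (Real.exp 1)⁻¹ (1 : ℝ), Real.exp (-(α * Real.exp (-(α * y)))) - y = 0) := by
  set f : ℝ → ℝ := fun y => Real.exp (-(α * Real.exp (-(α * y)))) - y with hf
  have he : (0:ℝ) < Real.exp 1 := Real.exp_pos 1
  have hα0 : (0:ℝ) < α := lt_trans he hα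
  have hcont : Continuous f := by fun_prop
  have hkey : α < Real.exp (α / Real.exp 1) := key_ineq α hα
  -- f(0) > 0
  have h0 : 0 < f 0 := by
    simp only [hf, mul_zero, neg_zero, Real.exp_zero, mul_one, sub_zero]
    exact Real.exp_pos _
  -- f(α⁻¹) < 0 : exp(-(α/e)) < 1/α
  have hainv : f α⁻¹ < 0 := by
    have h1 : α * α⁻¹ = 1 := mul_inv_cancel₀ (ne_of_gt hα0)
    have h2 : Real.exp (-(α * Real.exp (-1))) < α⁻¹ := by
      rw [Real.exp_neg]
      rw [inv_lt_inv₀ (Real.exp_pos _) hα0]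
      calc α < Real.exp (α / Real.exp 1) := hkey
        _ = Real.exp (α * Real.exp (-1)) := by
            rw [Real.exp_neg, div_eq_mul_inv]
    simp only [hf, h1]
    linarith
  -- f(e⁻¹) > 0 : need α * exp(-(α/e)) < 1
  have heinv : 0 < f (Real.exp 1)⁻¹ := by
    have h1 : α * (Real.exp 1)⁻¹ = α / Real.exp 1 := by rw [div_eq_mul_inv]
    have h2 : α * Real.exp (-(α / Real.exp 1)) < 1 := by
      rw [Real.exp_neg]
      rw [mul_inv_lt_iff₀ (Real.exp_pos _)]
      simpa using hkey
    have h3 : Real.exp (-1) < Real.exp (-(α * Real.exp (-(α / Real.exp 1)))) :=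
      Real.exp_lt_exp.2 (by linarith)
    simp only [hf, h1]
    rw [Real.exp_neg (1:ℝ)] at h3
    linarith
  -- f(1) < 0
  have h1' : f 1 < 0 := by
    simp only [hf, mul_one]
    have : Real.exp (-(α * Real.exp (-α))) < 1 := by
      rw [Real.exp_lt_one_iff]
      have := Real.exp_pos (-α)
      nlinarith
    linarith
  have hainv_pos : (0:ℝ) < α⁻¹ := inv_pos.2 hα0
  have hle : α⁻¹ < (Real.exp 1)⁻¹ := by
    exact inv_strictAnti₀ he hα
  have he1 : (Real.exp 1)⁻¹ < 1 := by
    rw [inv_lt_one_iff₀]; right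
    nlinarith [Real.add_one_lt_exp (one_ne_zero : (1:ℝ) ≠ 0)]
  exact ⟨ivt_zero f hcont 0 α⁻¹ (le_of_lt hainv_pos) h0 hainv,
    ivt_zero' f hcont α⁻¹ (Real.exp 1)⁻¹ (le_of_lt hle) hainv heinv,
    ivt_zero f hcont (Real.exp 1)⁻¹ 1 (le_of_lt he1) heinv h1'⟩
end

section
/- Let φ be a repulsive tempered pair potential on (X,d,μ) with C_φ > 0 such that ∫_X (1 − e^{−φ(v,w)}) dμ(w) = C_φ for every v ∈ X, and let γ₁ denote the damping function identically equal to 1. Then for every λ > e/C_φ there exist two infinite-depth tree recursions adapted to (λ,γ₁) that are not almost-everywhere equal. Explicitly, there exist z₁* ≠ z₂* in [0,λ] with z₁* = λ·e^{−C_φ·z₂*} and z₂* = λ·e^{−C_φ·z₁*}, and the function taking constant value z₁* on tuples of odd length and z₂* on tuples of even length, together with the function with the roles of z₁* and z₂* swapped, are two distinct infinite-depth tree recursions adapted to (λ,γ₁). -/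
open MeasureTheory ENNReal Filter

lemma alt_isInfTreeRecursion {X : Type*} [MetricSpace X] [MeasurableSpace X]
    (μ : MeasureTheory.Measure X) (φ : X → X → ℝ≥0∞) (hsymm : ∀ x y, φ x y = φ y x)
    (hhom : ∀ v : X, ∫⁻ x, pairWt φ x v ∂μ = CPhi μ φ)
    (lam a b : ℝ) (ha : a ∈ Set.Icc 0 lam) (hb : b ∈ Set.Icc 0 lam)
    (hab : a = lam * Real.exp (-((CPhi μ φ).toReal * b)))
    (hba : b = lam * Real.exp (-((CPhi μ φ).toReal * a))) :
    IsInfTreeRecursion μ φ lam (fun _ _ => 1)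
      (fun n (_ : Fin (n + 1) → X) => if Even n then a else b) := by
  have hint : ∀ (x : X) (c : ℝ), 0 ≤ c →
      (∫⁻ w, pairWt φ x w * ENNReal.ofReal c ∂μ).toReal = (CPhi μ φ).toReal * c := by
    intro x c hc
    have h1 : ∀ w, pairWt φ x w = pairWt φ w x := fun w => by unfold pairWt; rw [hsymm]
    simp_rw [h1]
    rw [MeasureTheory.lintegral_mul_const' _ _ ENNReal.ofReal_ne_top, hhom x,
      ENNReal.toReal_mul, ENNReal.toReal_ofReal hc]
  refine ⟨fun n => measurable_const, fun n v => by dsimp only; split_ifs <;> assumption,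
    fun n => Filter.Eventually.of_forall fun v => ?_⟩
  rcases Nat.even_or_odd n with hn | hn
  · have h2 : ¬ Even (n + 1) := by simp [Nat.even_add_one, hn]
    simp only [if_pos hn, if_neg h2, mul_one]
    rw [hint _ b hb.1]
    exact hab
  · have hn' : ¬ Even n := Nat.not_even_iff_odd.mpr hn
    have h2 : Even (n + 1) := Nat.even_add_one.mpr hn'
    simp only [if_neg hn', if_pos h2, mul_one]
    rw [hint _ a ha.1]
    exact hba

/-- Suppose `∫ (1-e^{-φ(v,w)}) dμ(w) = C_φ > 0` for every `v` (homogeneity),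
and let `γ₁ ≡ 1`. For every `λ > e/C_φ` there are two infinite-depth tree recursions adapted
to `(λ, γ₁)` that are not almost-everywhere equal: explicitly, there are `z₁ ≠ z₂` in `[0,λ]`
with `z₁ = λ e^{-C_φ z₂}` and `z₂ = λ e^{-C_φ z₁}`, and the alternating constant functions
(value `z₁` on tuples of odd length, `z₂` on tuples of even length, and vice versa) are two
distinct infinite-depth tree recursions adapted to `(λ, γ₁)`. -/
theorem infTreeRecursion_nonUnique_above_threshold
    {X : Type*} [MetricSpace X] [CompleteSpace X] [TopologicalSpace.SeparableSpace X]
    [MeasurableSpace X] [BorelSpace X]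
    (μ : Measure X) [IsLocallyFiniteMeasure μ] [SigmaFinite μ]
    (φ : X → X → ℝ≥0∞) (hφ : IsRepulsivePotential φ) (hT : Tempered μ φ)
    (hhom : ∀ v : X, ∫⁻ x, pairWt φ x v ∂μ = CPhi μ φ) (hpos : 0 < CPhi μ φ)
    (lam : ℝ) (hlam : Real.exp 1 < lam * (CPhi μ φ).toReal) :
    ∃ z₁ z₂ : ℝ, z₁ ∈ Set.Icc 0 lam ∧ z₂ ∈ Set.Icc 0 lam ∧ z₁ ≠ z₂ ∧
      z₁ = lam * Real.exp (-((CPhi μ φ).toReal * z₂)) ∧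
      z₂ = lam * Real.exp (-((CPhi μ φ).toReal * z₁)) ∧
      IsInfTreeRecursion μ φ lam (fun _ _ => 1)
        (fun n (_ : Fin (n + 1) → X) => if Even n then z₁ else z₂) ∧
      IsInfTreeRecursion μ φ lam (fun _ _ => 1)
        (fun n (_ : Fin (n + 1) → X) => if Even n then z₂ else z₁) ∧
      ∃ n : ℕ, ¬ ((fun (_ : Fin (n + 1) → X) => if Even n then z₁ else z₂)
          =ᵐ[Measure.pi fun _ : Fin (n + 1) => μ]
        (fun (_ : Fin (n + 1) → X) => if Even n then z₂ else z₁)) := by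
  classical
  set C : ℝ := (CPhi μ φ).toReal with hCdef
  have hC : 0 < C := ENNReal.toReal_pos hpos.ne' hT.ne
  have hE : (0:ℝ) < Real.exp 1 := Real.exp_pos 1
  have hE1 : (1:ℝ) < Real.exp 1 := by
    have := Real.add_one_lt_exp (x := 1) one_ne_zero
    linarith
  have hlampos : 0 < lam := by nlinarith
  -- the recursion map
  set f : ℝ → ℝ := fun z => lam * Real.exp (-(C * z)) with hfdef
  have hfpos : ∀ z, 0 < f z := fun z => mul_pos hlampos (Real.exp_pos _)
  have hfle : ∀ z, 0 ≤ z → f z ≤ lam := by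
    intro z hz
    have h1 : Real.exp (-(C * z)) ≤ 1 := Real.exp_le_one_iff.mpr (by nlinarith)
    have := mul_le_mul_of_nonneg_left h1 hlampos.le
    simpa [hfdef] using this
  set H : ℝ → ℝ := fun z => f (f z) - z with hHdef
  have hH0 : 0 < H 0 := by
    have : H 0 = f (f 0) := by simp [hHdef]
    rw [this]; exact hfpos _
  -- key inequality : t e^{-t/e} < 1 for t = lam*C > e
  have key : lam * C * Real.exp (-(lam * C / Real.exp 1)) < 1 := by
    set t : ℝ := lam * C with htdef
    have ht : Real.exp 1 < t := hlam
    have htpos : 0 < t := lt_trans hE ht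
    have hlogt : Real.log t < t / Real.exp 1 := by
      have h1 : Real.log (t / Real.exp 1) < t / Real.exp 1 - 1 :=
        Real.log_lt_sub_one_of_pos (by positivity)
          (by
            intro h
            have : t = Real.exp 1 := by
              field_simp at h; linarith
            exact absurd this (ne_of_gt ht))
      rw [Real.log_div htpos.ne' (Real.exp_pos 1).ne', Real.log_exp] at h1
      linarith
    have h2 : t < Real.exp (t / Real.exp 1) := by
      calc t = Real.exp (Real.log t) := (Real.exp_log htpos).symm
        _ < Real.exp (t / Real.exp 1) := Real.exp_lt_exp.mpr hlogt
    calc t * Real.exp (-(t / Real.exp 1))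
        < Real.exp (t / Real.exp 1) * Real.exp (-(t / Real.exp 1)) := by
          exact mul_lt_mul_of_pos_right h2 (Real.exp_pos _)
      _ = 1 := by rw [← Real.exp_add]; simp
  have e1 : f (1 / C) = lam * Real.exp (-1) := by
    have hc1 : C * (1 / C) = 1 := by field_simp
    show lam * Real.exp (-(C * (1 / C))) = _
    rw [hc1]
  have e2 : f (f (1 / C)) = lam * Real.exp (-(lam * C / Real.exp 1)) := by
    rw [e1]
    show lam * Real.exp (-(C * (lam * Real.exp (-1)))) = _
    rw [Real.exp_neg 1]
    congr 2
    field_simp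
  have hH1 : H (1 / C) < 0 := by
    have h3 : lam * Real.exp (-(lam * C / Real.exp 1)) < 1 / C := by
      rw [lt_div_iff₀ hC]
      nlinarith [Real.exp_pos (-(lam * C / Real.exp 1))]
    have : H (1 / C) = f (f (1 / C)) - 1 / C := rfl
    rw [this, e2]; linarith
  -- IVT
  have hcont : Continuous H := by
    simp only [hHdef, hfdef]
    fun_prop
  have h01 : (0:ℝ) ≤ 1 / C := by positivity
  obtain ⟨z₁, hz₁mem, hz₁fix⟩ :=
    intermediate_value_Icc' h01 hcont.continuousOn ⟨hH1.le, hH0.le⟩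
  have hz₁0 : 0 ≤ z₁ := hz₁mem.1
  have hz₁C : z₁ ≤ 1 / C := hz₁mem.2
  have hgz : f (f z₁) = z₁ := by
    have : f (f z₁) - z₁ = 0 := hz₁fix
    linarith
  set z₂ : ℝ := f z₁ with hz₂def
  have hz₂0 : 0 < z₂ := hfpos z₁
  have hz₂lam : z₂ ≤ lam := hfle z₁ hz₁0
  have hCz₁ : C * z₁ ≤ 1 := by
    have := mul_le_mul_of_nonneg_left hz₁C hC.le
    rwa [mul_one_div, div_self hC.ne'] at this
  have hz₁lt : z₁ < z₂ := by
    have h4 : lam * Real.exp (-1) ≤ z₂ := by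
      have : Real.exp (-1) ≤ Real.exp (-(C * z₁)) := Real.exp_le_exp.mpr (by linarith)
      have := mul_le_mul_of_nonneg_left this hlampos.le
      simpa [hz₂def, hfdef] using this
    have h5 : 1 / C < lam * Real.exp (-1) := by
      rw [Real.exp_neg 1, ← div_eq_mul_inv, div_lt_div_iff₀ hC hE]
      nlinarith
    linarith
  have hz₁lam : z₁ ≤ lam := by
    have : 1 / C < lam := by
      rw [div_lt_iff₀ hC]; nlinarith
    linarith
  have heq1 : z₁ = lam * Real.exp (-(C * z₂)) := by
    rw [← hgz, hz₂def]
  have heq2 : z₂ = lam * Real.exp (-(C * z₁)) := by rw [hz₂def]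
  -- nonzero measure
  have hμ : μ ≠ 0 := by
    intro h
    rw [h] at hpos
    simp [CPhi, MeasureTheory.lintegral_zero_measure] at hpos
  refine ⟨z₁, z₂, ⟨hz₁0, hz₁lam⟩, ⟨hz₂0.le, hz₂lam⟩, hz₁lt.ne, heq1, heq2,
    alt_isInfTreeRecursion μ φ hφ.1 hhom lam z₁ z₂ ⟨hz₁0, hz₁lam⟩ ⟨hz₂0.le, hz₂lam⟩ heq1 heq2,
    alt_isInfTreeRecursion μ φ hφ.1 hhom lam z₂ z₁ ⟨hz₂0.le, hz₂lam⟩ ⟨hz₁0, hz₁lam⟩ heq2 heq1,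
    0, ?_⟩
  intro hcontra
  have hpi : (MeasureTheory.Measure.pi fun _ : Fin 1 => μ) ≠ 0 := by
    intro h
    have h2 : (MeasureTheory.Measure.pi fun _ : Fin 1 => μ) Set.univ = 0 := by
      rw [h]; rfl
    rw [MeasureTheory.Measure.pi_univ] at h2
    simp at h2
    exact hμ h2
  haveI := MeasureTheory.ae_neBot.mpr hpi
  obtain ⟨v, hv⟩ := hcontra.exists
  simp at hv
  exact hz₁lt.ne hv
end
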